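/- Let S be a set of cardinality κ > ω and let X be S equipped with the cofinite topology. Then every infinite cardinal λ is a caliber for X (and consequently also a caliber*, precaliber, precaliber*, weak precaliber, and weak precaliber* for X). -/

import Mathlib

/-!
In the cofinite topology every non-empty open set misses only finitely many points, so the
point sought is one lying in `λ` of the sets. If `λ < #X`, the complements cover fewer than
`#X` points and any point outside them lies in all the sets. If `#X ≤ λ`, then `λ` is
uncountable; were every point in fewer than `λ` of the sets, uncountably many points would lie
in at most `ν` of them for a single `ν < λ`. Each set contains one of any countably infinite
family of such points, so `λ ≤ ℵ₀ · ν < λ`.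
-/

open Cardinal Set

universe u

/-- `κ` is a caliber for `X`: every κ-indexed family of non-empty open sets
(repetitions allowed) has a κ-sized subfamily with non-empty intersection. -/
def IsCaliber (X : Type u) [TopologicalSpace X] (κ : Cardinal.{u}) : Prop :=
  ∀ {ι : Type u} (U : ι → Set X), #ι = κ → (∀ i, IsOpen (U i)) → (∀ i, (U i).Nonempty) →
    ∃ J : Set ι, #J = κ ∧ (⋂ i ∈ J, U i).Nonempty

/-- `κ` is a precaliber for `X`: every κ-indexed family of non-empty open sets
has a κ-sized subfamily which is centered. -/
def IsPrecaliber (X : Type u) [TopologicalSpace X] (κ : Cardinal.{u}) : Prop :=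
  ∀ {ι : Type u} (U : ι → Set X), #ι = κ → (∀ i, IsOpen (U i)) → (∀ i, (U i).Nonempty) →
    ∃ J : Set ι, #J = κ ∧
      ∀ s : Finset ι, ↑s ⊆ J → s.Nonempty → (⋂ i ∈ s, U i).Nonempty

/-- `κ` is a weak precaliber for `X`: every κ-indexed family of non-empty open sets
has a κ-sized subfamily which is linked. -/
def IsWeakPrecaliber (X : Type u) [TopologicalSpace X] (κ : Cardinal.{u}) : Prop :=
  ∀ {ι : Type u} (U : ι → Set X), #ι = κ → (∀ i, IsOpen (U i)) → (∀ i, (U i).Nonempty) →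
    ∃ J : Set ι, #J = κ ∧ ∀ i ∈ J, ∀ j ∈ J, (U i ∩ U j).Nonempty

/-- `κ` is a caliber* for `X`: every family of non-empty open sets of cardinality `κ`
has a subfamily of cardinality `κ` with non-empty intersection. -/
def IsCaliberStar (X : Type u) [TopologicalSpace X] (κ : Cardinal.{u}) : Prop :=
  ∀ 𝒰 : Set (Set X), #𝒰 = κ → (∀ U ∈ 𝒰, IsOpen U) → (∀ U ∈ 𝒰, U.Nonempty) →
    ∃ 𝒱 ⊆ 𝒰, #𝒱 = κ ∧ (⋂₀ 𝒱).Nonempty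

/-- `κ` is a precaliber* for `X`: every family of non-empty open sets of cardinality `κ`
has a centered subfamily of cardinality `κ`. -/
def IsPrecaliberStar (X : Type u) [TopologicalSpace X] (κ : Cardinal.{u}) : Prop :=
  ∀ 𝒰 : Set (Set X), #𝒰 = κ → (∀ U ∈ 𝒰, IsOpen U) → (∀ U ∈ 𝒰, U.Nonempty) →
    ∃ 𝒱 ⊆ 𝒰, #𝒱 = κ ∧
      ∀ s : Finset (Set X), ↑s ⊆ 𝒱 → s.Nonempty → (⋂₀ (↑s : Set (Set X))).Nonempty

/-- `κ` is a weak precaliber* for `X`: every family of non-empty open sets of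
cardinality `κ` has a linked subfamily of cardinality `κ`. -/
def IsWeakPrecaliberStar (X : Type u) [TopologicalSpace X] (κ : Cardinal.{u}) : Prop :=
  ∀ 𝒰 : Set (Set X), #𝒰 = κ → (∀ U ∈ 𝒰, IsOpen U) → (∀ U ∈ 𝒰, U.Nonempty) →
    ∃ 𝒱 ⊆ 𝒰, #𝒱 = κ ∧ ∀ U ∈ 𝒱, ∀ V ∈ 𝒱, (U ∩ V).Nonempty

/-- `o X` : the number of open subsets of `X`. -/
def oCard (X : Type u) [TopologicalSpace X] : Cardinal.{u} :=
  #{U : Set X | IsOpen U}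

/-- A cellular family: a pairwise disjoint collection of non-empty open sets. -/
def IsCellularFamily (X : Type u) [TopologicalSpace X] (𝒰 : Set (Set X)) : Prop :=
  (∀ U ∈ 𝒰, IsOpen U) ∧ (∀ U ∈ 𝒰, U.Nonempty) ∧ 𝒰.Pairwise Disjoint

lemma countable_of_finite_setOf_le {Y α : Type*} [LinearOrder α] (f : Y → α)
    (hf : ∀ y₀, {y | f y ≤ f y₀}.Finite) : Countable Y := by
  have hfiber : ∀ n : ℕ, {y | {y' | f y' ≤ f y}.ncard = n}.Finite := by
    intro n
    rcases eq_empty_or_nonempty {y | {y' | f y' ≤ f y}.ncard = n} with hempty | ⟨y₀, hy₀⟩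
    · exact hempty ▸ finite_empty
    refine (hf y₀).subset fun y hy => (le_total (f y) (f y₀)).elim id fun hle => ?_
    -- sublevel sets are nested, so two of the same finite size coincide
    have hsub : {y' | f y' ≤ f y₀} ⊆ {y' | f y' ≤ f y} := fun y' h => h.trans hle
    have heq := eq_of_subset_of_ncard_le hsub (hy.trans hy₀.symm).le (hf y)
    exact heq.symm ▸ le_refl (f y)
  have hcount : (univ : Set Y).Countable :=
    (countable_iUnion fun n => (hfiber n).countable).mono fun y _ =>
      mem_iUnion.mpr ⟨_, (rfl : {y' | f y' ≤ f y}.ncard = _)⟩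
  exact countable_univ_iff.mp hcount

lemma exists_lt_infinite_setOf_le {Y : Type u} (hY : ℵ₀ < #Y) {lam : Cardinal.{u}}
    (g : Y → Cardinal.{u}) (hg : ∀ y, g y < lam) : ∃ ν < lam, {y | g y ≤ ν}.Infinite := by
  by_contra! h
  have : Countable Y := countable_of_finite_setOf_le g fun y₀ => h _ (hg y₀)
  exact hY.not_ge mk_le_aleph0

section CofiniteFamilies

variable {X ι : Type u} {U : ι → Set X}

lemma nonempty_iInter_of_finite_compl (hU : ∀ i, (U i)ᶜ.Finite) (hX : ℵ₀ < #X)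
    (hι : #ι < #X) : (⋂ i, U i).Nonempty := by
  have hsmall : #(⋃ i, (U i)ᶜ) < #X :=
    calc #(⋃ i, (U i)ᶜ) ≤ #ι * ⨆ i, #((U i)ᶜ : Set X) := mk_iUnion_le _
      _ ≤ #ι * ℵ₀ := by gcongr; exact ciSup_le' fun i => (hU i).lt_aleph0.le
      _ < #X := mul_lt_of_lt hX.le hι hX
  have hcover : ⋃ i, (U i)ᶜ ≠ (univ : Set X) := fun h => by
    rw [h, mk_univ] at hsmall
    exact hsmall.false
  obtain ⟨x, hx⟩ := (ne_univ_iff_exists_notMem _).mp hcover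
  exact ⟨x, by simpa using hx⟩

lemma mk_le_mul_of_infinite {A : Set X} {ν : Cardinal.{u}} (hU : ∀ i, (U i)ᶜ.Finite)
    (hA : A.Infinite) (hν : ∀ x ∈ A, #{i | x ∈ U i} ≤ ν) : #ι ≤ #A * ν := by
  have hcover : (univ : Set ι) ⊆ ⋃ x ∈ A, {i | x ∈ U i} := fun i _ => by
    obtain ⟨x, hxA, hxU⟩ := (hA.sdiff (hU i)).nonempty
    exact mem_biUnion hxA (notMem_compl_iff.mp hxU)
  calc #ι = #(univ : Set ι) := mk_univ.symm
    _ ≤ #(⋃ x ∈ A, {i | x ∈ U i}) := mk_le_mk_of_subset hcover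
    _ ≤ #A * ⨆ x : A, #{i | (x : X) ∈ U i} := mk_biUnion_le _ _
    _ ≤ #A * ν := by gcongr; exact ciSup_le' fun x => hν x x.2

lemma exists_mk_setOf_mem_eq (hU : ∀ i, (U i)ᶜ.Finite) (hX : ℵ₀ < #X) (hι : ℵ₀ ≤ #ι) :
    ∃ x, #{i | x ∈ U i} = #ι := by
  rcases lt_or_ge #ι #X with hlt | hge
  · obtain ⟨x, hx⟩ := nonempty_iInter_of_finite_compl hU hX hlt
    refine ⟨x, ?_⟩
    rw [show {i | x ∈ U i} = (univ : Set ι) from eq_univ_of_forall (mem_iInter.mp hx), mk_univ]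
  · by_contra! h
    have hlt : ∀ x, #{i | x ∈ U i} < #ι := fun x => (mk_set_le _).lt_of_ne (h x)
    obtain ⟨ν, hν, hinf⟩ := exists_lt_infinite_setOf_le hX _ hlt
    obtain ⟨A, hAsub, hA⟩ := le_mk_iff_exists_subset.mp (infinite_iff.mp hinf.to_subtype)
    have hAinf : A.Infinite := infinite_coe_iff.mp (infinite_iff.mpr hA.ge)
    have hbound := mk_le_mul_of_infinite hU hAinf fun x hx => hAsub hx
    rw [hA] at hbound
    have hι' : ℵ₀ < #ι := hX.trans_le hge
    exact hbound.not_gt (mul_lt_of_lt hι hι' hν)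

end CofiniteFamilies

lemma isCaliber_cofiniteTopology {X : Type u} (hX : ℵ₀ < #X) {lam : Cardinal.{u}}
    (hlam : ℵ₀ ≤ lam) : IsCaliber (CofiniteTopology X) lam := by
  intro ι U hcard hopen hne
  subst hcard
  obtain ⟨x, hx⟩ := exists_mk_setOf_mem_eq (fun i => CofiniteTopology.isOpen_iff.mp (hopen i) (hne i))
    (hX.trans_eq (mk_congr CofiniteTopology.of)) hlam
  exact ⟨_, hx, x, mem_iInter₂.mpr fun _ hi => hi⟩

section Implications

variable {X : Type u} [TopologicalSpace X] {lam : Cardinal.{u}}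

lemma IsCaliber.isCaliberStar (h : IsCaliber X lam) : IsCaliberStar X lam := by
  intro 𝒰 hcard hopen hne
  obtain ⟨J, hJ, hJne⟩ := h (fun V : 𝒰 => (V : Set X)) hcard (fun V => hopen V V.2)
    (fun V => hne V V.2)
  refine ⟨Subtype.val '' J, Subtype.coe_image_subset _ _, ?_, ?_⟩
  · rwa [mk_image_eq Subtype.val_injective]
  · rwa [sInter_image]

lemma IsCaliber.isPrecaliber (h : IsCaliber X lam) : IsPrecaliber X lam := by
  intro ι U hcard hopen hne
  obtain ⟨J, hJ, x, hx⟩ := h U hcard hopen hne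
  rw [mem_iInter₂] at hx
  exact ⟨J, hJ, fun s hs _ => ⟨x, mem_iInter₂.mpr fun i hi => hx i (hs hi)⟩⟩

lemma IsCaliberStar.isPrecaliberStar (h : IsCaliberStar X lam) : IsPrecaliberStar X lam := by
  intro 𝒰 hcard hopen hne
  obtain ⟨𝒱, h𝒱, hcard𝒱, x, hx⟩ := h 𝒰 hcard hopen hne
  exact ⟨𝒱, h𝒱, hcard𝒱, fun s hs _ => ⟨x, fun V hV => hx V (hs hV)⟩⟩

lemma IsPrecaliber.isWeakPrecaliber (h : IsPrecaliber X lam) : IsWeakPrecaliber X lam := by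
  intro ι U hcard hopen hne
  obtain ⟨J, hJ, hcentered⟩ := h U hcard hopen hne
  classical
  refine ⟨J, hJ, fun i hi j hj => ?_⟩
  simpa using hcentered {i, j} (by simp [insert_subset_iff, hi, hj]) (by simp)

lemma IsPrecaliberStar.isWeakPrecaliberStar (h : IsPrecaliberStar X lam) :
    IsWeakPrecaliberStar X lam := by
  intro 𝒰 hcard hopen hne
  obtain ⟨𝒱, h𝒱, hcard𝒱, hcentered⟩ := h 𝒰 hcard hopen hne
  classical
  refine ⟨𝒱, h𝒱, hcard𝒱, fun U hU V hV => ?_⟩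
  simpa using hcentered {U, V} (by simp [insert_subset_iff, hU, hV]) (by simp)

end Implications

theorem stmt12 (X : Type u) (κ : Cardinal.{u}) (hX : #X = κ) (hκ : ℵ₀ < κ)
    (lam : Cardinal.{u}) (hlam : ℵ₀ ≤ lam) :
    IsCaliber (CofiniteTopology X) lam ∧ IsCaliberStar (CofiniteTopology X) lam ∧
    IsPrecaliber (CofiniteTopology X) lam ∧ IsPrecaliberStar (CofiniteTopology X) lam ∧
    IsWeakPrecaliber (CofiniteTopology X) lam ∧ IsWeakPrecaliberStar (CofiniteTopology X) lam := by
  have hcal : IsCaliber (CofiniteTopology X) lam := isCaliber_cofiniteTopology (hX ▸ hκ) hlam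
  have hcalStar : IsCaliberStar (CofiniteTopology X) lam := hcal.isCaliberStar
  have hpre : IsPrecaliber (CofiniteTopology X) lam := hcal.isPrecaliber
  have hpreStar : IsPrecaliberStar (CofiniteTopology X) lam := hcalStar.isPrecaliberStar
  exact ⟨hcal, hcalStar, hpre, hpreStar, hpre.isWeakPrecaliber, hpreStar.isWeakPrecaliberStar⟩
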